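/- Let ŷ : 𝒳 → ℝ and for each x ∈ 𝒳 let f̂_x : ℝ → ℝ be strictly increasing. Define the generalized residual-distribution forecast G_x(y) = (1/n)∑ᵢ 1{ŷ(x) + f̂_x⁻¹(f̂_{xᵢ}(yᵢ − ŷ(xᵢ))) ≤ y}. Then for each index i, G_{xᵢ}(yᵢ) = (1/n)·#{j : f̂_{xⱼ}(yⱼ − ŷ(xⱼ)) ≤ f̂_{xᵢ}(yᵢ − ŷ(xᵢ))}, and hence G is in-sample probabilistically calibrated with respect to the empirical measure of (x₁,y₁),…,(xₙ,yₙ). -/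

import Mathlib

/-!
Since `f̂_x` is strictly increasing, `ŷ(x) + f̂_x⁻¹(r) ≤ t ↔ r ≤ f̂_x(t - ŷ(x))`. At `x = xᵢ`,
`t = yᵢ` this turns `G_{xᵢ}(yᵢ)` into the normalised rank of `rᵢ = f̂_{xᵢ}(yᵢ - ŷ(xᵢ))` among
`r₁, …, rₙ`, and its left limit into the normalised strict rank. Calibration is then a property
of the ranks of any finite family: the indices of rank `≤ a` all lie weakly below the largest of
them, so there are at most `a` of them; dually, if some index has strict rank `≥ a`, the smallest
such one has at least `a` indices strictly below it, all of strict rank `< a`.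
-/

open Filter Topology Finset

section RankCalibration

variable {ι β : Type*} [Fintype ι] [LinearOrder β]

theorem card_filter_rank_le_le (r : ι → β) {a : ℝ} (ha : 0 ≤ a) :
    (#{i | (#{j | r j ≤ r i} : ℝ) ≤ a} : ℝ) ≤ a := by
  set S : Finset ι := {i | (#{j | r j ≤ r i} : ℝ) ≤ a}
  obtain hS | hS := S.eq_empty_or_nonempty
  · simpa [hS] using ha
  obtain ⟨i₀, hi₀, hmax⟩ := S.exists_max_image r hS
  have hsub : S ⊆ ({j | r j ≤ r i₀} : Finset ι) := fun j hj =>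
    mem_filter.2 ⟨mem_univ j, hmax j hj⟩
  calc (#S : ℝ) ≤ #{j | r j ≤ r i₀} := mod_cast card_le_card hsub
    _ ≤ a := (mem_filter.1 hi₀).2

theorem le_card_filter_rank_lt [DecidableEq ι] (r : ι → β) {a : ℝ} (ha : a ≤ Fintype.card ι) :
    a ≤ (#{i | (#{j | r j < r i} : ℝ) < a} : ℝ) := by
  set T : Finset ι := {i | (#{j | r j < r i} : ℝ) < a}
  by_cases hT : Tᶜ.Nonempty
  · obtain ⟨i₀, hi₀, hmin⟩ := Tᶜ.exists_min_image r hT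
    have hsub : ({j | r j < r i₀} : Finset ι) ⊆ T := fun j hj => by
      by_contra hjT
      exact (mem_filter.1 hj).2.not_ge (hmin j (mem_compl.2 hjT))
    calc a ≤ #{j | r j < r i₀} := not_lt.1 fun h => mem_compl.1 hi₀ (mem_filter.2 ⟨mem_univ _, h⟩)
      _ ≤ #T := mod_cast card_le_card hsub
  · rw [not_nonempty_iff_eq_empty, compl_eq_empty_iff] at hT
    rwa [hT, card_univ]

end RankCalibration

theorem eventually_filter_le_eq_filter_lt {ι α : Type*} [Fintype ι]
    [LinearOrder α] [TopologicalSpace α] [OrderTopology α] (c : ι → α) (a : α) :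
    ∀ᶠ t in 𝓝[<] a, ({j | c j ≤ t} : Finset ι) = ({j | c j < a} : Finset ι) := by
  have : ∀ j, ∀ᶠ t in 𝓝[<] a, (c j ≤ t ↔ c j < a) := fun j => by
    by_cases hj : c j < a
    · filter_upwards [Ioo_mem_nhdsLT hj] with t ht
      exact iff_of_true ht.1.le hj
    · filter_upwards [self_mem_nhdsWithin] with t (ht : t < a)
      exact iff_of_false (fun h => hj (h.trans_lt ht)) hj
  filter_upwards [eventually_all.2 this] with t ht
  exact filter_congr fun j _ => ht j

theorem leftLim_comp_filter_le {ι α β : Type*} [Fintype ι]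
    [LinearOrder α] [TopologicalSpace α] [OrderTopology α] [TopologicalSpace β] [T2Space β]
    (F : Finset ι → β) (c : ι → α) (a : α) [(𝓝[<] a).NeBot] :
    Function.leftLim (fun t => F {j | c j ≤ t}) a = F {j | c j < a} :=
  leftLim_eq_of_tendsto <| tendsto_const_nhds.congr' <|
    (eventually_filter_le_eq_filter_lt c a).mono fun _ ht => (congrArg F ht).symm

section InverseShift

variable {α β : Type*} [AddCommGroup α] [LinearOrder α] [IsOrderedAddMonoid α] [LinearOrder β]
  [Nonempty α] {g : α → β}

theorem add_invFun_le_iff (hg : StrictMono g) (hsurj : Function.Surjective g)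
    (c t : α) (r : β) : c + Function.invFun g r ≤ t ↔ r ≤ g (t - c) := by
  rw [← le_sub_iff_add_le', ← hg.le_iff_le, Function.invFun_eq (hsurj r)]

theorem add_invFun_lt_iff (hg : StrictMono g) (hsurj : Function.Surjective g)
    (c t : α) (r : β) : c + Function.invFun g r < t ↔ r < g (t - c) := by
  rw [← lt_sub_iff_add_lt', ← hg.lt_iff_lt, Function.invFun_eq (hsurj r)]

end InverseShift

open Classical in
/-- For the generalised residual-distribution forecast, `G_{xᵢ}(yᵢ)` is the normalised
rank of the transformed residual, and the procedure is in-sample probabilistically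
calibrated with respect to the empirical measure. -/
theorem stmt_3 {X : Type*} (n : ℕ) (hn : 0 < n) (x : Fin n → X) (y : Fin n → ℝ)
    (yhat : X → ℝ) (f : X → ℝ → ℝ)
    (hfmono : ∀ x', StrictMono (f x')) (hfbij : ∀ x', Function.Bijective (f x'))
    (G : X → ℝ → ℝ)
    (hG : ∀ x' t, G x' t =
      ((Finset.univ.filter fun i =>
        yhat x' + Function.invFun (f x') (f (x i) (y i - yhat (x i))) ≤ t).card : ℝ) / n) :
    (∀ i, G (x i) (y i) =
      ((Finset.univ.filter fun j =>
        f (x j) (y j - yhat (x j)) ≤ f (x i) (y i - yhat (x i))).card : ℝ) / n) ∧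
    (∀ α ∈ Set.Ioo (0 : ℝ) 1,
      ((Finset.univ.filter fun i => G (x i) (y i) ≤ α).card : ℝ) / n ≤ α ∧
      α ≤ ((Finset.univ.filter fun i =>
            Function.leftLim (G (x i)) (y i) < α).card : ℝ) / n) := by
  set r : Fin n → ℝ := fun j => f (x j) (y j - yhat (x j))
  have hrank : ∀ i, G (x i) (y i) = (#{j | r j ≤ r i} : ℝ) / n := fun i => by
    simp_rw [hG, add_invFun_le_iff (hfmono _) (hfbij _).2]
    rfl
  have hrank_left : ∀ i, Function.leftLim (G (x i)) (y i) = (#{j | r j < r i} : ℝ) / n :=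
    fun i => by
      rw [show G (x i) = _ from funext (hG (x i)), leftLim_comp_filter_le (fun s => (#s : ℝ) / n)]
      simp_rw [add_invFun_lt_iff (hfmono _) (hfbij _).2]
      rfl
  have hn' : (0 : ℝ) < n := mod_cast hn
  refine ⟨hrank, fun α hα => ⟨?_, ?_⟩⟩
  · simp_rw [hrank, div_le_iff₀ hn']
    exact card_filter_rank_le_le r (mul_nonneg hα.1.le hn'.le)
  · simp_rw [hrank_left, div_lt_iff₀ hn', le_div_iff₀ hn']
    exact le_card_filter_rank_lt r (by simpa using mul_le_of_le_one_left hn'.le hα.2.le)
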